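/- For every real z with 0 < z < 1/12, the series ∑_{p=0}^∞ Z(p+1)·z^p converges and its sum equals 1/2 + ((1 − 12z)^{3/2} − 1)/(24·√3·z). -/

import Mathlib

/-!
The generating function is a shifted binomial series: for `n ≥ 2` one has
`24√3 Z(n) = c(n) := binom(3/2, n) (-12)^n`, because both sides satisfy the first-order
recurrence `(n + 1) c(n + 1) = (12 n - 18) c(n)`, while `Z(1)` exceeds `c(1) / (24√3)` by `1/2`.
Hence the series is `1/2 + ((1 - 12 z)^{3/2} - 1) / (24√3 z)` by Newton's binomial theorem,
valid for `|12 z| < 1`.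
-/

/-- The partition function of critical Boltzmann triangulations of the p-gon:
Z(1) = (2−√3)/4 and Z(p) = 6^p·(2p−5)!!/(8·√3·p!) for p ≥ 2,
with (2p−5)!! read as 1 when p = 2 (natural subtraction gives 0!! = 1). -/
noncomputable def Zfun (p : ℕ) : ℝ :=
  if p = 1 then (2 - Real.sqrt 3) / 4
  else 6 ^ p * (Nat.doubleFactorial (2 * p - 5) : ℝ) / (8 * Real.sqrt 3 * (Nat.factorial p : ℝ))

open Polynomial in
theorem Ring.succ_nsmul_choose_succ {R : Type*} [CommRing R] [BinomialRing R] (r : R) (k : ℕ) :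
    (k + 1) • Ring.choose r (k + 1) = (r - k) * Ring.choose r k := by
  have := BinomialRing.toIsAddTorsionFree (R := R)
  rw [← nsmul_right_inj (Nat.factorial_ne_zero k), smul_smul, mul_comm, ← Nat.factorial_succ,
    ← Ring.descPochhammer_eq_factorial_smul_choose, ← mul_smul_comm,
    ← Ring.descPochhammer_eq_factorial_smul_choose, descPochhammer_succ_right]
  simp [smeval_mul, smeval_sub, smeval_X, smeval_natCast, mul_comm]

theorem Real.hasSum_choose_mul_pow (a : ℝ) {x : ℝ} (hx : |x| < 1) :
    HasSum (fun n ↦ Ring.choose a n * x ^ n) ((1 + x) ^ a) := by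
  have := (Real.one_add_rpow_hasFPowerSeriesOnBall_zero (a := a)).hasSum (y := x)
    (by simpa [edist_zero_right, enorm_eq_nnnorm, ← NNReal.coe_lt_one] using hx)
  simpa [binomialSeries, FormalMultilinearSeries.ofScalars_apply_eq, mul_comm] using this

open Nat in
theorem choose_three_halves_mul_pow (m : ℕ) :
    Ring.choose (3 / 2 : ℝ) (m + 2) * (-12) ^ (m + 2)
      = 3 * 6 ^ (m + 2) * (2 * m - 1)‼ / (m + 2)! := by
  have hrec (k : ℕ) :
      Ring.choose (3 / 2 : ℝ) (k + 1) = (3 / 2 - k) / (k + 1) * Ring.choose (3 / 2 : ℝ) k := by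
    have := Ring.succ_nsmul_choose_succ (3 / 2 : ℝ) k
    rw [nsmul_eq_mul] at this
    push_cast at this
    rw [div_mul_eq_mul_div, eq_div_iff (by positivity)]
    linear_combination this
  induction m with
  | zero =>
    rw [hrec, hrec, Ring.choose_zero_right]
    norm_num [Nat.factorial]
  | succ m ih =>
    calc Ring.choose (3 / 2 : ℝ) (m + 3) * (-12) ^ (m + 3)
        = -12 * (3 / 2 - (m + 2)) / (m + 3)
            * (Ring.choose (3 / 2 : ℝ) (m + 2) * (-12) ^ (m + 2)) := by
          rw [hrec]; push_cast; ring
      _ = 3 * 6 ^ (m + 3) * (2 * m + 1)‼ / (m + 3)! := by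
          rw [ih, doubleFactorial_add_one, factorial_succ (m + 2)]
          push_cast
          field_simp
          ring

theorem Zfun_succ_mul_pow (p : ℕ) {z : ℝ} (hz : z ≠ 0) :
    Zfun (p + 1) * z ^ p = (if p = 0 then 1 / 2 else 0)
      + Ring.choose (3 / 2 : ℝ) (p + 1) * (-12 * z) ^ (p + 1) / (24 * Real.sqrt 3 * z) := by
  have h3 : Real.sqrt 3 ^ 2 = 3 := Real.sq_sqrt (by norm_num)
  rcases p with _ | m
  · simp only [Zfun, if_true, zero_add, Ring.choose_one_right]
    field_simp
    linear_combination (-48 : ℝ) * h3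
  · rw [Zfun, if_neg (by omega), if_neg (by omega), zero_add, mul_pow, ← mul_assoc,
      choose_three_halves_mul_pow m, show 2 * (m + 1 + 1) - 5 = 2 * m - 1 by omega]
    field_simp
    ring

/-- For 0 < z < 1/12, the series ∑ Z(p+1)·z^p converges with sum
1/2 + ((1 − 12z)^{3/2} − 1)/(24·√3·z). -/
theorem Z_generating_function (z : ℝ) (hz0 : 0 < z) (hz1 : z < 1 / 12) :
    HasSum (fun p : ℕ => Zfun (p + 1) * z ^ p)
      (1 / 2 + ((1 - 12 * z) ^ (3 / 2 : ℝ) - 1) / (24 * Real.sqrt 3 * z)) := by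
  have hbinom : HasSum (fun n ↦ Ring.choose (3 / 2 : ℝ) n * (-12 * z) ^ n)
      ((1 - 12 * z) ^ (3 / 2 : ℝ)) := by
    simpa [sub_eq_add_neg] using
      Real.hasSum_choose_mul_pow (3 / 2) (x := -12 * z) (by rw [abs_lt]; constructor <;> linarith)
  have htail := ((hasSum_nat_add_iff' 1).mpr hbinom).div_const (24 * Real.sqrt 3 * z)
  simp only [Finset.sum_range_one, Ring.choose_zero_right, pow_zero, mul_one] at htail
  simpa only [Zfun_succ_mul_pow _ hz0.ne'] using (hasSum_ite_eq 0 (1 / 2 : ℝ)).add htail
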